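/- arXiv:1612.02388 — 3 statements merged into one kernel-verified Lean document; each statement's English description precedes it below -/
import Mathlib

section
/- Assume f satisfies (f1)–(f3) and (f5). Then f(t) ≥ 0 and F̂(t) ≥ 0 for all t ≥ 0, and the function t ↦ F(t)/t² is nondecreasing on (0,∞). -/
noncomputable section

open MeasureTheory Real Filter Topology Set ENNReal

/-- Euclidean space ℝ^N. -/
abbrev RN (N : ℕ) := EuclideanSpace ℝ (Fin N)

/-- The Gagliardo bilinear form
`E(u,v) = ∫∫ (u(x)-u(y))(v(x)-v(y))/|x-y|^{N+2s} dx dy`. -/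
def fracE (N : ℕ) (s : ℝ) (u v : RN N → ℝ) : ℝ :=
  ∫ p : RN N × RN N, ((u p.1 - u p.2) * (v p.1 - v p.2)) / ‖p.1 - p.2‖ ^ ((N : ℝ) + 2 * s)

/-- The Gagliardo seminorm squared `[u]²`, as an extended nonnegative real. -/
def gagliardo2 (N : ℕ) (s : ℝ) (u : RN N → ℝ) : ℝ≥0∞ :=
  ∫⁻ p : RN N × RN N, ENNReal.ofReal ((u p.1 - u p.2) ^ 2 / ‖p.1 - p.2‖ ^ ((N : ℝ) + 2 * s))

/-- Membership in the fractional Sobolev space `H^s(ℝ^N)`. -/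
def memHs (N : ℕ) (s : ℝ) (u : RN N → ℝ) : Prop :=
  MemLp u 2 (volume : Measure (RN N)) ∧ gagliardo2 N s u < ⊤

/-- `F(t) = ∫₀ᵗ f(τ) dτ`. -/
def Fint (f : ℝ → ℝ) (t : ℝ) : ℝ := ∫ τ in (0:ℝ)..t, f τ

/-- `F̂(t) = (1/2) f(t) t − F(t)`. -/
def Fhat (f : ℝ → ℝ) (t : ℝ) : ℝ := f t * t / 2 - Fint f t

/-- Condition (f1). -/
def Cond1 (f : ℝ → ℝ) : Prop := ContDiff ℝ 1 f ∧ ∀ t ≤ (0:ℝ), f t = 0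

/-- Condition (f2). -/
def Cond2 (f : ℝ → ℝ) : Prop := Tendsto (fun t => f t / t) (𝓝[≠] 0) (𝓝 0)

/-- Condition (f3), for a given exponent `p`. -/
def Cond3 (N : ℕ) (s : ℝ) (f : ℝ → ℝ) (p : ℝ) : Prop :=
  1 < p ∧ p < ((N : ℝ) + 2 * s) / ((N : ℝ) - 2 * s) ∧
    Tendsto (fun t => f t / t ^ p) atTop (𝓝 0)

/-- Condition (f4) (Ambrosetti–Rabinowitz). -/
def Cond4 (f : ℝ → ℝ) : Prop :=
  ∃ μ : ℝ, 2 < μ ∧ ∀ t > (0:ℝ), 0 < μ * Fint f t ∧ μ * Fint f t ≤ f t * t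

/-- Condition (f5)(i): `f(t)/t → a ∈ (0,∞]` as `t → ∞`. -/
def Cond5i (f : ℝ → ℝ) : Prop :=
  Tendsto (fun t => f t / t) atTop atTop ∨
    ∃ a : ℝ, 0 < a ∧ Tendsto (fun t => f t / t) atTop (𝓝 a)

/-- Condition (f5)(i) together with `inf_Λ V < a` in the finite-limit case. -/
def Cond5i' (N : ℕ) (f : ℝ → ℝ) (V : RN N → ℝ) (Λ : Set (RN N)) : Prop :=
  Tendsto (fun t => f t / t) atTop atTop ∨
    ∃ a : ℝ, 0 < a ∧ Tendsto (fun t => f t / t) atTop (𝓝 a) ∧ sInf (V '' Λ) < a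

/-- Condition (f5)(ii) with constant `D`. -/
def Cond5ii (f : ℝ → ℝ) (D : ℝ) : Prop :=
  1 ≤ D ∧ ∀ t tb : ℝ, 0 ≤ t → t ≤ tb → Fhat f t ≤ D * Fhat f tb

/-- The truncated nonlinearity `f̲`. -/
def fbar (f : ℝ → ℝ) (ν t : ℝ) : ℝ := if 0 ≤ t then min (f t) (ν * t) else 0

/-- The penalized nonlinearity `g(x,t) = χ(x) f(t) + (1−χ(x)) f̲(t)`. -/
def gpen (N : ℕ) (f : ℝ → ℝ) (ν : ℝ) (χ : RN N → ℝ) (x : RN N) (t : ℝ) : ℝ :=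
  χ x * f t + (1 - χ x) * fbar f ν t

/-- `G(x,t) = ∫₀ᵗ g(x,τ) dτ`. -/
def Gpen (N : ℕ) (f : ℝ → ℝ) (ν : ℝ) (χ : RN N → ℝ) (x : RN N) (t : ℝ) : ℝ :=
  ∫ τ in (0:ℝ)..t, gpen N f ν χ x τ

/-- Membership in `H^s_ε`. -/
def memHsEps (N : ℕ) (s : ℝ) (V : RN N → ℝ) (ε : ℝ) (v : RN N → ℝ) : Prop :=
  memHs N s v ∧ Integrable (fun x => V (ε • x) * v x ^ 2)

/-- The squared norm `‖v‖²_{H^s_ε} = [v]² + ∫ V(εx) v²`. -/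
def normHsEpsSq (N : ℕ) (s : ℝ) (V : RN N → ℝ) (ε : ℝ) (v : RN N → ℝ) : ℝ :=
  fracE N s v v + ∫ x, V (ε • x) * v x ^ 2

/-- The squared norm `‖v‖²_{H^s} = [v]² + V₀ ∫ v²`. -/
def normHsSq (N : ℕ) (s : ℝ) (V₀ : ℝ) (v : RN N → ℝ) : ℝ :=
  fracE N s v v + V₀ * ∫ x, v x ^ 2

/-- The penalized energy functional `J_ε`. -/
def Jeps (N : ℕ) (s : ℝ) (f : ℝ → ℝ) (ν : ℝ) (χ V : RN N → ℝ) (ε : ℝ)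
    (v : RN N → ℝ) : ℝ :=
  (1 / 2) * normHsEpsSq N s V ε v - ∫ x, Gpen N f ν χ (ε • x) (v x)

/-- The derivative `J'_ε(v)[φ]`. -/
def JprimeEps (N : ℕ) (s : ℝ) (f : ℝ → ℝ) (ν : ℝ) (χ V : RN N → ℝ) (ε : ℝ)
    (v φ : RN N → ℝ) : ℝ :=
  fracE N s v φ + (∫ x, V (ε • x) * v x * φ x) - ∫ x, gpen N f ν χ (ε • x) (v x) * φ x

/-- The dual norm `‖J'_ε(v)‖_*`. -/
def dualNormJeps (N : ℕ) (s : ℝ) (f : ℝ → ℝ) (ν : ℝ) (χ V : RN N → ℝ) (ε : ℝ)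
    (v : RN N → ℝ) : ℝ :=
  sSup {r : ℝ | ∃ φ, memHsEps N s V ε φ ∧ normHsEpsSq N s V ε φ ≤ 1 ∧
    r = |JprimeEps N s f ν χ V ε v φ|}

/-- The mountain pass class `Γ_ε` of continuous paths in `H^s_ε`. -/
def PathClass (N : ℕ) (s : ℝ) (f : ℝ → ℝ) (ν : ℝ) (χ V : RN N → ℝ) (ε : ℝ) :
    Set (ℝ → RN N → ℝ) :=
  {γ | (∀ t ∈ Icc (0:ℝ) 1, memHsEps N s V ε (γ t)) ∧ γ 0 = (fun _ => 0) ∧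
    Jeps N s f ν χ V ε (γ 1) < 0 ∧
    ∀ t₀ ∈ Icc (0:ℝ) 1, ∀ δ > (0:ℝ), ∃ η > (0:ℝ), ∀ t ∈ Icc (0:ℝ) 1,
      |t - t₀| < η → normHsEpsSq N s V ε (fun x => γ t x - γ t₀ x) < δ}

/-- The mountain pass value `c_ε`. -/
def cEps (N : ℕ) (s : ℝ) (f : ℝ → ℝ) (ν : ℝ) (χ V : RN N → ℝ) (ε : ℝ) : ℝ :=
  sInf ((fun γ => sSup ((fun t => Jeps N s f ν χ V ε (γ t)) '' Icc (0:ℝ) 1)) ''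
    PathClass N s f ν χ V ε)

/-- The autonomous functional `Φ_{x₀}`. -/
def Phi (N : ℕ) (s : ℝ) (f : ℝ → ℝ) (ν : ℝ) (χ V : RN N → ℝ) (x₀ : RN N)
    (v : RN N → ℝ) : ℝ :=
  (1 / 2) * (fracE N s v v + V x₀ * ∫ x, v x ^ 2) - ∫ x, Gpen N f ν χ x₀ (v x)

/-- `v` is a critical point of `Φ_{x₀}`. -/
def IsCritPt (N : ℕ) (s : ℝ) (f : ℝ → ℝ) (ν : ℝ) (χ V : RN N → ℝ) (x₀ : RN N)
    (v : RN N → ℝ) : Prop :=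
  memHs N s v ∧ ∀ φ, memHs N s φ →
    fracE N s v φ + V x₀ * (∫ x, v x * φ x) = ∫ x, gpen N f ν χ x₀ (v x) * φ x

/-- `H(x,t) = −(1/2) V(x) t² + G(x,t)`. -/
def Hpen (N : ℕ) (f : ℝ → ℝ) (ν : ℝ) (χ V : RN N → ℝ) (x : RN N) (t : ℝ) : ℝ :=
  -(1 / 2) * V x * t ^ 2 + Gpen N f ν χ x t

/-- `Ω = {x : sup_{t>0} H(x,t) > 0}`. -/
def OmegaSet (N : ℕ) (f : ℝ → ℝ) (ν : ℝ) (χ V : RN N → ℝ) : Set (RN N) :=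
  {x | ∃ t > (0:ℝ), 0 < Hpen N f ν χ V x t}

open Classical in
/-- The least energy level `m(x)`, equal to `∞` outside `Ω`. -/
def mfun (N : ℕ) (s : ℝ) (f : ℝ → ℝ) (ν : ℝ) (χ V : RN N → ℝ) (x : RN N) : EReal :=
  if x ∈ OmegaSet N f ν χ V then
    sInf ((fun u => ((Phi N s f ν χ V x u : ℝ) : EReal)) ''
      {u : RN N → ℝ | u ≠ 0 ∧ IsCritPt N s f ν χ V x u})
  else ⊤

/-- The penalization setup of del Pino–Felmer type. -/
structure PenSetup (N : ℕ) (s : ℝ) (V : RN N → ℝ) (V₀ ν : ℝ)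
    (Λ Λ' : Set (RN N)) (χ : RN N → ℝ) : Prop where
  hN : 2 ≤ N
  hs0 : 0 < s
  hs1 : s < 1
  hNs : 2 * s < (N : ℝ)
  hVcont : Continuous V
  hV₀ : 0 < V₀
  hVlb : ∀ x, V₀ ≤ V x
  hΛo : IsOpen Λ
  hΛb : Bornology.IsBounded Λ
  hΛ'o : IsOpen Λ'
  hΛ'b : Bornology.IsBounded Λ'
  hsub : Λ' ⊆ Λ
  h0 : (0 : RN N) ∈ Λ'
  hinf1 : sInf (V '' Λ') = sInf (V '' Λ)
  hinf2 : sInf (V '' Λ) < sInf (V '' frontier Λ')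
  hinf3 : sInf (V '' Λ) < sInf (V '' (Λ \ Λ'))
  hinf4 : sInf (V '' Λ) < sInf (V '' frontier Λ)
  hV0 : V 0 = sInf (V '' Λ)
  hν0 : 0 < ν
  hν1 : ν < V₀ / 2
  hχsmooth : ContDiff ℝ (⊤ : ℕ∞) χ
  hχ01 : ∀ x, χ x ∈ Icc (0:ℝ) 1
  hχ1 : ∀ x ∈ Λ', χ x = 1
  hχ0 : ∀ x ∉ Λ, χ x = 0
  hχmid : ∀ x ∈ Λ \ closure Λ', χ x ∈ Ioo (0:ℝ) 1

/-- Local Hölder continuity. -/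
def LocallyHolder (N : ℕ) (V : RN N → ℝ) : Prop :=
  ∀ x : RN N, ∃ (C α : NNReal) (r : ℝ), 0 < r ∧ 0 < α ∧ α ≤ 1 ∧
    HolderOnWith C α V (Metric.ball x r)


theorem stmt_2 (N : ℕ) (hN : 2 ≤ N) (s : ℝ) (hs0 : 0 < s) (hs1 : s < 1)
    (hNs : 2 * s < (N : ℝ))
    (f : ℝ → ℝ) (p : ℝ) (hf1 : Cond1 f) (hf2 : Cond2 f) (hf3 : Cond3 N s f p)
    (hf5i : Cond5i f) (D : ℝ) (hf5ii : Cond5ii f D) :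
    (∀ t : ℝ, 0 ≤ t → 0 ≤ f t) ∧ (∀ t : ℝ, 0 ≤ t → 0 ≤ Fhat f t) ∧
      MonotoneOn (fun t => Fint f t / t ^ 2) (Ioi (0:ℝ)) := by
  have hfc : Continuous f := hf1.1.continuous
  have hf0 : f 0 = 0 := hf1.2 0 le_rfl
  have hFhat0 : Fhat f 0 = 0 := by simp [Fhat, Fint, hf0]
  have hFhat : ∀ t : ℝ, 0 ≤ t → 0 ≤ Fhat f t := by
    intro t ht
    have h := hf5ii.2 0 t le_rfl ht
    rw [hFhat0] at h
    nlinarith [hf5ii.1]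
  have hderiv : ∀ t : ℝ, HasDerivAt (Fint f) (f t) t := fun t =>
    intervalIntegral.integral_hasDerivAt_right (hfc.intervalIntegrable _ _)
      (hfc.stronglyMeasurableAtFilter _ _) hfc.continuousAt
  have hg : ∀ t : ℝ, t ≠ 0 → HasDerivAt (fun u => Fint f u / u ^ 2)
      ((f t * t ^ 2 - Fint f t * (2 * t ^ 1)) / (t ^ 2) ^ 2) t := by
    intro t ht
    exact (hderiv t).div (hasDerivAt_pow 2 t) (pow_ne_zero _ ht)
  have hmono : MonotoneOn (fun t => Fint f t / t ^ 2) (Ioi (0:ℝ)) := by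
    apply monotoneOn_of_deriv_nonneg (convex_Ioi 0)
    · intro t ht
      exact ((hg t (ne_of_gt ht)).continuousAt).continuousWithinAt
    · intro t ht
      rw [interior_Ioi] at ht
      exact (hg t (ne_of_gt ht)).differentiableAt.differentiableWithinAt
    · intro t ht
      rw [interior_Ioi] at ht
      rw [(hg t (ne_of_gt ht)).deriv]
      have h1 : 0 ≤ Fhat f t := hFhat t ht.le
      have ht' : (0:ℝ) < t := ht
      have h3 : 0 ≤ (f t * t / 2 - Fint f t) * t := mul_nonneg h1 ht'.le
      apply div_nonneg _ (by positivity)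
      nlinarith [h3]
  have hFint : ∀ t : ℝ, 0 < t → 0 ≤ Fint f t := by
    intro t ht
    have key : ∀ ε : ℝ, 0 < ε → 0 ≤ Fint f t / t ^ 2 + ε := by
      intro ε hε
      obtain ⟨δ, hδ0, hδ⟩ := Metric.tendsto_nhdsWithin_nhds.mp hf2 ε hε
      set u : ℝ := min (δ / 2) t with hu
      have hu0 : 0 < u := lt_min (by linarith) ht
      have hut : u ≤ t := min_le_right _ _
      have hbound : ∀ τ ∈ Icc (0:ℝ) u, -(ε * τ) ≤ f τ := by
        intro τ ⟨hτ0, hτu⟩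
        rcases eq_or_lt_of_le hτ0 with h | h
        · simp [← h, hf0]
        · have hτδ : dist τ 0 < δ := by
            rw [Real.dist_eq, sub_zero, abs_of_pos h]
            have : u ≤ δ / 2 := min_le_left _ _
            linarith
          have := hδ (Set.mem_setOf.mpr (ne_of_gt h)) hτδ
          rw [Real.dist_eq, sub_zero] at this
          have h2 : |f τ| < ε * τ := by
            rw [abs_div] at this
            rw [abs_of_pos h] at this
            calc |f τ| = |f τ| / τ * τ := by field_simp
            _ < ε * τ := by exact mul_lt_mul_of_pos_right this h
          have := abs_lt.mp h2
          linarith [this.1]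
      have hint : Fint f u ≥ ∫ τ in (0:ℝ)..u, -(ε * τ) := by
        apply intervalIntegral.integral_mono_on hu0.le _ (hfc.intervalIntegrable _ _) hbound
        exact (Continuous.intervalIntegrable (by continuity) _ _)
      have hval : (∫ τ in (0:ℝ)..u, -(ε * τ)) = -(ε * u ^ 2 / 2) := by
        rw [intervalIntegral.integral_neg, intervalIntegral.integral_const_mul, integral_id]
        ring
      have hgu : -(ε / 2) ≤ Fint f u / u ^ 2 := by
        rw [hval] at hint
        rw [le_div_iff₀ (by positivity : (0:ℝ) < u ^ 2)]
        nlinarith [hint]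
      have hmono' := hmono (mem_Ioi.mpr hu0) (mem_Ioi.mpr ht) hut
      simp only at hmono'
      linarith
    have h0 : 0 ≤ Fint f t / t ^ 2 := by
      by_contra h
      push_neg at h
      have := key (-(Fint f t / t ^ 2) / 2) (by linarith)
      linarith
    calc (0:ℝ) = 0 * t ^ 2 := by ring
    _ ≤ Fint f t / t ^ 2 * t ^ 2 := by
        apply mul_le_mul_of_nonneg_right h0 (by positivity)
    _ = Fint f t := by field_simp
  refine ⟨?_, hFhat, hmono⟩
  intro t ht
  rcases eq_or_lt_of_le ht with h | h
  · simp [← h, hf0]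
  · have h1 := hFhat t ht
    have h2 := hFint t h
    unfold Fhat at h1
    nlinarith

end
end

section
/- Assume f satisfies (f1)–(f3) and (f5) with constant D ≥ 1 in (f5)(ii), let ν ∈ (0, V₀/2) be a regular value of t ↦ f(t)/t on (0,∞) with ν < a, and let k_ν = card{t ∈ (0,∞) : f(t) = νt} (which is finite). Then for every x ∈ ℝ^N and all 0 ≤ ξ ≤ t one has Ĝ(x,ξ) ≤ D^{k_ν} Ĝ(x,t), where Ĝ(x,t) = (1/2)g(x,t)t − G(x,t). -/
noncomputable section

open MeasureTheory Real Filter Topology Set ENNReal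

/-! ### Auxiliary lemmas for `stmt_5` -/

section AuxStmt5

variable {f : ℝ → ℝ} {ν D : ℝ}

lemma fbar_eq_min (hf1 : Cond1 f) :
    fbar f ν = fun t => min (f t) (ν * max t 0) := by
  funext t
  unfold fbar
  rcases le_or_gt 0 t with h | h
  · rw [if_pos h, max_eq_left h]
  · rw [if_neg (not_le.2 h), max_eq_right h.le, mul_zero, hf1.2 t h.le, min_self]

lemma fbar_continuous (hf1 : Cond1 f) : Continuous (fbar f ν) := by
  rw [fbar_eq_min hf1]
  exact (hf1.1.continuous).min (continuous_const.mul (continuous_id.max continuous_const))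

lemma fbar_le_self {t : ℝ} (ht : 0 ≤ t) : fbar f ν t ≤ f t := by
  unfold fbar; rw [if_pos ht]; exact min_le_left _ _

lemma fbar_le_nu {t : ℝ} (ht : 0 ≤ t) : fbar f ν t ≤ ν * t := by
  unfold fbar; rw [if_pos ht]; exact min_le_right _ _

lemma Fhat_zero : Fhat f 0 = 0 := by
  simp [Fhat, Fint]

lemma Fhat_nonneg (hf5ii : Cond5ii f D) {t : ℝ} (ht : 0 ≤ t) : 0 ≤ Fhat f t := by
  have h := hf5ii.2 0 t le_rfl ht
  rw [Fhat_zero] at h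
  have hD := hf5ii.1
  nlinarith [h]

/-- Monotonicity of `Fhat (fbar f ν)` over regions where `f ≥ ν t`. -/
lemma Fhat_fbar_mono (hf1 : Cond1 f) {a b : ℝ} (ha : 0 ≤ a) (hab : a ≤ b)
    (h : ∀ τ ∈ Set.Ioc a b, ν * τ ≤ f τ) :
    Fhat (fbar f ν) a ≤ Fhat (fbar f ν) b := by
  rcases eq_or_lt_of_le hab with rfl | hlt
  · exact le_rfl
  have hfbc : Continuous (fbar f ν) := fbar_continuous hf1
  have hint : ∫ τ in a..b, fbar f ν τ = ν * ((b ^ 2 - a ^ 2) / 2) := by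
    have h1 : ∫ τ in a..b, fbar f ν τ = ∫ τ in a..b, ν * τ := by
      apply intervalIntegral.integral_congr_ae
      filter_upwards with τ hτ
      rw [Set.uIoc_of_le hab] at hτ
      have h0τ : 0 ≤ τ := le_of_lt (lt_of_le_of_lt ha hτ.1)
      unfold fbar
      rw [if_pos h0τ, min_eq_right (h τ hτ)]
    rw [h1, intervalIntegral.integral_const_mul, integral_id]
  have hb : fbar f ν b = ν * b := by
    unfold fbar
    rw [if_pos (ha.trans hab), min_eq_right (h b ⟨hlt, le_rfl⟩)]
  have hfba : fbar f ν a ≤ ν * a := fbar_le_nu ha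
  have hsplit : Fint (fbar f ν) b = Fint (fbar f ν) a + ∫ τ in a..b, fbar f ν τ := by
    unfold Fint
    exact (intervalIntegral.integral_add_adjacent_intervals
      (hfbc.intervalIntegrable 0 a) (hfbc.intervalIntegrable a b)).symm
  unfold Fhat
  rw [hsplit, hint, hb]
  have hmul := mul_le_mul_of_nonneg_right hfba ha
  nlinarith [hmul]

lemma Fhat_fbar_decomp (hf1 : Cond1 f) (u : ℝ) :
    Fhat (fbar f ν) u = Fhat f u + u * (fbar f ν u - f u) / 2
      + ∫ τ in (0:ℝ)..u, (f τ - fbar f ν τ) := by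
  have hfc := hf1.1.continuous
  have hfbc : Continuous (fbar f ν) := fbar_continuous hf1
  have hsub : ∫ τ in (0:ℝ)..u, (f τ - fbar f ν τ)
      = Fint f u - Fint (fbar f ν) u := by
    unfold Fint
    exact intervalIntegral.integral_sub (hfc.intervalIntegrable 0 u)
      (hfbc.intervalIntegrable 0 u)
  rw [hsub]
  unfold Fhat
  ring

/-- The key quasi-monotonicity estimate for the truncated nonlinearity. -/
lemma fbar_quasi (hf1 : Cond1 f) (hf5ii : Cond5ii f D) {ξ t : ℝ}
    (hξ : 0 ≤ ξ) (hξt : ξ ≤ t) :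
    Fhat (fbar f ν) ξ ≤ D * Fhat (fbar f ν) t ∧ 0 ≤ Fhat (fbar f ν) t := by
  have hfc := hf1.1.continuous
  have hfbc : Continuous (fbar f ν) := fbar_continuous hf1
  have hD1 := hf5ii.1
  have hD0 : (0:ℝ) < D := lt_of_lt_of_le one_pos hD1
  have ht0 : 0 ≤ t := hξ.trans hξt
  set A : Set ℝ := Set.Icc 0 t ∩ {τ | f τ ≤ ν * τ} with hA
  have hAcl : IsClosed A := isClosed_Icc.inter
    (isClosed_le hfc (continuous_const.mul continuous_id))
  have h0A : (0:ℝ) ∈ A := by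
    refine ⟨⟨le_rfl, ht0⟩, ?_⟩
    simp [hf1.2 0 le_rfl]
  have hAbdd : BddAbove A := BddAbove.mono Set.inter_subset_left bddAbove_Icc
  set r := sSup A with hr
  have hrA : r ∈ A := hAcl.csSup_mem ⟨0, h0A⟩ hAbdd
  have hr0 : 0 ≤ r := hrA.1.1
  have hrt : r ≤ t := hrA.1.2
  have hfr : f r ≤ ν * r := hrA.2
  have hIoc : ∀ τ ∈ Set.Ioc r t, ν * τ ≤ f τ := by
    intro τ hτ
    by_contra hc
    push_neg at hc
    have hτA : τ ∈ A := ⟨⟨hr0.trans hτ.1.le, hτ.2⟩, hc.le⟩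
    exact absurd (le_csSup hAbdd hτA) (not_le.2 hτ.1)
  have hfbr : fbar f ν r = f r := by
    unfold fbar; rw [if_pos hr0, min_eq_left hfr]
  have hFr : Fhat (fbar f ν) r
      = Fhat f r + ∫ τ in (0:ℝ)..r, (f τ - fbar f ν τ) := by
    rw [Fhat_fbar_decomp hf1, hfbr]; ring
  have hEr : 0 ≤ ∫ τ in (0:ℝ)..r, (f τ - fbar f ν τ) :=
    intervalIntegral.integral_nonneg hr0
      (fun τ hτ => sub_nonneg.2 (fbar_le_self hτ.1))
  have hFrt : Fhat (fbar f ν) r ≤ Fhat (fbar f ν) t := Fhat_fbar_mono hf1 hr0 hrt hIoc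
  have hFt0 : 0 ≤ Fhat (fbar f ν) t := by
    refine le_trans ?_ hFrt
    rw [hFr]
    exact add_nonneg (Fhat_nonneg hf5ii hr0) hEr
  refine ⟨?_, hFt0⟩
  rcases le_or_gt ξ r with hξr | hrξ
  · have hEξr : (∫ τ in (0:ℝ)..ξ, (f τ - fbar f ν τ))
        ≤ ∫ τ in (0:ℝ)..r, (f τ - fbar f ν τ) := by
      have hadd : (∫ τ in (0:ℝ)..ξ, (f τ - fbar f ν τ))
          + ∫ τ in ξ..r, (f τ - fbar f ν τ)
          = ∫ τ in (0:ℝ)..r, (f τ - fbar f ν τ) :=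
        intervalIntegral.integral_add_adjacent_intervals
          ((hfc.sub hfbc).intervalIntegrable 0 ξ) ((hfc.sub hfbc).intervalIntegrable ξ r)
      have hpos : 0 ≤ ∫ τ in ξ..r, (f τ - fbar f ν τ) :=
        intervalIntegral.integral_nonneg hξr
          (fun τ hτ => sub_nonneg.2 (fbar_le_self (hξ.trans hτ.1)))
      linarith
    have hFξ : Fhat (fbar f ν) ξ ≤ Fhat f ξ + ∫ τ in (0:ℝ)..ξ, (f τ - fbar f ν τ) := by
      rw [Fhat_fbar_decomp hf1]
      have hle : fbar f ν ξ ≤ f ξ := fbar_le_self hξ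
      nlinarith [hle, hξ]
    have hq : Fhat f ξ ≤ D * Fhat f r := hf5ii.2 ξ r hξ hξr
    have hEDr : (∫ τ in (0:ℝ)..r, (f τ - fbar f ν τ))
        ≤ D * ∫ τ in (0:ℝ)..r, (f τ - fbar f ν τ) :=
      le_mul_of_one_le_left hEr hD1
    have hmul : D * Fhat (fbar f ν) r ≤ D * Fhat (fbar f ν) t :=
      mul_le_mul_of_nonneg_left hFrt hD0.le
    have hdist : D * Fhat (fbar f ν) r
        = D * Fhat f r + D * ∫ τ in (0:ℝ)..r, (f τ - fbar f ν τ) := by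
      rw [hFr]; ring
    linarith
  · have hmono : Fhat (fbar f ν) ξ ≤ Fhat (fbar f ν) t :=
      Fhat_fbar_mono hf1 hξ hξt (fun τ hτ => hIoc τ ⟨hrξ.trans hτ.1, hτ.2⟩)
    exact hmono.trans (le_mul_of_one_le_left hFt0 hD1)

/-- The set of positive solutions of `f t = ν t` is finite and nonempty. -/
lemma S_card_pos (hf1 : Cond1 f) (hf2 : Cond2 f) (hν0 : 0 < ν)
    (hνa : Tendsto (fun t => f t / t) atTop atTop ∨
      ∃ a : ℝ, 0 < a ∧ Tendsto (fun t => f t / t) atTop (𝓝 a) ∧ ν < a)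
    (hreg : ∀ t > (0:ℝ), f t / t = ν → deriv (fun τ => f τ / τ) t ≠ 0) :
    1 ≤ {τ : ℝ | 0 < τ ∧ f τ = ν * τ}.ncard := by
  have hfc := hf1.1.continuous
  set S : Set ℝ := {τ : ℝ | 0 < τ ∧ f τ = ν * τ} with hS
  have hsmall : ∃ δ > (0:ℝ), ∀ u : ℝ, 0 < u → u < δ → f u / u < ν := by
    have h : (fun u => f u / u) ⁻¹' Set.Iio ν ∈ 𝓝[≠] (0:ℝ) := hf2 (Iio_mem_nhds hν0)
    rw [Metric.mem_nhdsWithin_iff] at h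
    obtain ⟨δ, hδ0, hδ⟩ := h
    refine ⟨δ, hδ0, fun u hu0 huδ => ?_⟩
    have hu : u ∈ Metric.ball (0:ℝ) δ ∩ {(0:ℝ)}ᶜ := by
      constructor
      · simpa [Real.dist_eq, abs_of_pos hu0] using huδ
      · simpa using hu0.ne'
    exact hδ hu
  have hbig : ∃ M : ℝ, 0 < M ∧ ∀ u : ℝ, M ≤ u → ν < f u / u := by
    have h : ∀ᶠ u in atTop, ν < f u / u := by
      rcases hνa with h | ⟨a, _, hta, hνlt⟩
      · exact h.eventually_gt_atTop ν
      · exact hta.eventually (eventually_gt_nhds hνlt)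
    obtain ⟨M, hM⟩ := h.exists_forall_of_atTop
    exact ⟨max M 1, lt_of_lt_of_le one_pos (le_max_right _ _),
      fun u hu => hM u ((le_max_left _ _).trans hu)⟩
  obtain ⟨δ, hδ0, hδ⟩ := hsmall
  obtain ⟨M, hM0, hM⟩ := hbig
  have hSne : S.Nonempty := by
    set u₀ : ℝ := min (δ / 2) M with hu₀
    have hu₀0 : 0 < u₀ := lt_min (by linarith) hM0
    set b : ℝ := max M u₀ with hb
    have hu₀b : u₀ ≤ b := le_max_right _ _
    have h1 : f u₀ < ν * u₀ := by
      have h := hδ u₀ hu₀0 (lt_of_le_of_lt (min_le_left _ _) (by linarith))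
      rw [div_lt_iff₀ hu₀0] at h
      linarith
    have hb0 : 0 < b := lt_of_lt_of_le hM0 (le_max_left _ _)
    have h2 : ν * b < f b := by
      have h := hM b (le_max_left _ _)
      rw [lt_div_iff₀ hb0] at h
      linarith
    have hcont : ContinuousOn (fun u => f u - ν * u) (Set.Icc u₀ b) :=
      (hfc.sub (continuous_const.mul continuous_id)).continuousOn
    have hmem : (0:ℝ) ∈ Set.Icc (f u₀ - ν * u₀) (f b - ν * b) :=
      ⟨by linarith, by linarith⟩
    obtain ⟨τ, hτmem, hτeq⟩ := intermediate_value_Icc hu₀b hcont hmem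
    exact ⟨τ, lt_of_lt_of_le hu₀0 hτmem.1, by simp at hτeq; linarith⟩
  have hsub : S ⊆ Set.Icc δ M := by
    rintro τ ⟨hτ0, hτeq⟩
    have hτν : f τ / τ = ν := by
      rw [hτeq]; field_simp
    constructor
    · by_contra hc
      push_neg at hc
      exact absurd hτν (ne_of_lt (hδ τ hτ0 hc))
    · by_contra hc
      push_neg at hc
      exact absurd hτν (ne_of_gt (hM τ hc.le))
  have hSfin : S.Finite := by
    rw [← Set.not_infinite]
    intro hinf
    obtain ⟨x, hxK, hacc⟩ := hinf.exists_accPt_of_subset_isCompact isCompact_Icc hsub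
    have hx0 : 0 < x := lt_of_lt_of_le hδ0 hxK.1
    have hfreq : ∃ᶠ y in 𝓝[≠] x, y ∈ S := by
      rwa [Filter.frequently_mem_iff_neBot]
    have hxcl : x ∈ closure S :=
      mem_closure_iff_frequently.2 (hfreq.filter_mono nhdsWithin_le_nhds)
    have hcl : IsClosed {τ : ℝ | f τ = ν * τ} :=
      isClosed_eq hfc (continuous_const.mul continuous_id)
    have hfx : f x = ν * x :=
      closure_minimal (fun τ hτ => hτ.2) hcl hxcl
    have hxν : f x / x = ν := by
      rw [hfx]; field_simp
    have hd := hreg x hx0 hxν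
    have hdiff : DifferentiableAt ℝ (fun τ => f τ / τ) x :=
      ((hf1.1.differentiable one_ne_zero).differentiableAt).div differentiableAt_id hx0.ne'
    have hder := hdiff.hasDerivAt
    rw [hasDerivAt_iff_tendsto_slope] at hder
    have hne : ∀ᶠ y in 𝓝[≠] x, slope (fun τ => f τ / τ) x y ≠ 0 :=
      hder (isOpen_compl_singleton.mem_nhds hd)
    obtain ⟨y, hyS, hyslope⟩ := (hfreq.and_eventually hne).exists
    have hyν : f y / y = ν := by
      rw [hyS.2, mul_div_assoc, div_self hyS.1.ne', mul_one]
    apply hyslope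
    rw [slope_def_field]
    simp only [hxν, hyν, sub_self, zero_div]
  exact (Set.ncard_pos hSfin).2 hSne

/-- Decomposition of the penalized `Ĝ` in terms of `F̂` and the `F̂` of `fbar`. -/
lemma Ghat_decomp (N : ℕ) (χ : RN N → ℝ) (hf1 : Cond1 f) (x : RN N) (u : ℝ) :
    gpen N f ν χ x u * u / 2 - Gpen N f ν χ x u
      = χ x * Fhat f u + (1 - χ x) * Fhat (fbar f ν) u := by
  have hfc := hf1.1.continuous
  have hfbc : Continuous (fbar f ν) := fbar_continuous hf1
  have h1 : Gpen N f ν χ x u = χ x * Fint f u + (1 - χ x) * Fint (fbar f ν) u := by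
    unfold Gpen gpen Fint
    rw [intervalIntegral.integral_add (f := fun τ => χ x * f τ) (g := fun τ => (1 - χ x) * fbar f ν τ) ((continuous_const.mul hfc).intervalIntegrable _ _)
      ((continuous_const.mul hfbc).intervalIntegrable _ _),
      intervalIntegral.integral_const_mul, intervalIntegral.integral_const_mul]
  rw [h1]
  unfold gpen Fhat
  ring

end AuxStmt5


theorem stmt_5 (N : ℕ) (hN : 2 ≤ N) (s : ℝ) (hs0 : 0 < s) (hs1 : s < 1)
    (hNs : 2 * s < (N : ℝ))
    (f : ℝ → ℝ) (p : ℝ) (hf1 : Cond1 f) (hf2 : Cond2 f) (hf3 : Cond3 N s f p)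
    (D : ℝ) (hf5i : Cond5i f) (hf5ii : Cond5ii f D)
    (V₀ : ℝ) (hV₀ : 0 < V₀) (ν : ℝ) (hν0 : 0 < ν) (hν1 : ν < V₀ / 2)
    (hνa : Tendsto (fun t => f t / t) atTop atTop ∨
      ∃ a : ℝ, 0 < a ∧ Tendsto (fun t => f t / t) atTop (𝓝 a) ∧ ν < a)
    (hreg : ∀ t > (0:ℝ), f t / t = ν → deriv (fun τ => f τ / τ) t ≠ 0)
    (χ : RN N → ℝ) (hχ : ∀ x, χ x ∈ Icc (0:ℝ) 1) :
    ∀ (x : RN N) (ξ t : ℝ), 0 ≤ ξ → ξ ≤ t →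
      gpen N f ν χ x ξ * ξ / 2 - Gpen N f ν χ x ξ ≤
        D ^ ({τ : ℝ | 0 < τ ∧ f τ = ν * τ}.ncard) *
          (gpen N f ν χ x t * t / 2 - Gpen N f ν χ x t) := by
  intro x ξ t hξ hξt
  set k := {τ : ℝ | 0 < τ ∧ f τ = ν * τ}.ncard with hk
  have hk1 : 1 ≤ k := S_card_pos hf1 hf2 hν0 hνa hreg
  have hD1 := hf5ii.1
  have hD0 : (0:ℝ) < D := lt_of_lt_of_le one_pos hD1
  have hDk1 : 1 ≤ D ^ k := one_le_pow₀ hD1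
  have hDk : D ≤ D ^ k := le_self_pow₀ hD1 (by omega)
  have hFf : Fhat f ξ ≤ D * Fhat f t := hf5ii.2 ξ t hξ hξt
  have hFft : 0 ≤ Fhat f t := Fhat_nonneg hf5ii (hξ.trans hξt)
  obtain ⟨hFb, hFbt⟩ := fbar_quasi (ν := ν) hf1 hf5ii hξ hξt
  rw [Ghat_decomp N χ hf1 x ξ, Ghat_decomp N χ hf1 x t]
  have hχ0 := (hχ x).1
  have hχ1 := (hχ x).2
  have e1 : χ x * Fhat f ξ ≤ χ x * (D ^ k * Fhat f t) := by
    apply mul_le_mul_of_nonneg_left _ hχ0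
    calc Fhat f ξ ≤ D * Fhat f t := hFf
      _ ≤ D ^ k * Fhat f t := mul_le_mul_of_nonneg_right hDk hFft
  have e2 : (1 - χ x) * Fhat (fbar f ν) ξ ≤ (1 - χ x) * (D ^ k * Fhat (fbar f ν) t) := by
    apply mul_le_mul_of_nonneg_left _ (by linarith)
    calc Fhat (fbar f ν) ξ ≤ D * Fhat (fbar f ν) t := hFb
      _ ≤ D ^ k * Fhat (fbar f ν) t := mul_le_mul_of_nonneg_right hDk hFbt
  nlinarith [e1, e2]


end
end

section
/- Let (w_j) ⊂ H^s(ℝ^N) be a bounded sequence in H^s(ℝ^N), and let η ∈ C^∞(ℝ^N) with 0 ≤ η ≤ 1, η = 0 on the unit ball B₁ and η = 1 on ℝ^N \ B₂. Set η_R(x) = η(x/R). Then lim_{R→∞} limsup_{j→∞} ∫∫_{ℝ^N×ℝ^N} |w_j(x)|² |η_R(x) − η_R(y)|² / |x−y|^{N+2s} dx dy = 0. -/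
noncomputable section

open MeasureTheory Real Filter Topology Set ENNReal

lemma eta_lip {N : ℕ} (η : RN N → ℝ) (hηs : ContDiff ℝ (⊤ : ℕ∞) η)
    (hη1 : ∀ x ∉ Metric.ball (0 : RN N) 2, η x = 1) :
    ∃ L : ℝ, 1 ≤ L ∧ ∀ a b : RN N, |η a - η b| ≤ L * ‖a - b‖ := by
  have hdiff : Differentiable ℝ η := hηs.differentiable (by simp)
  have hcont : Continuous fun x => ‖fderiv ℝ η x‖ :=
    (hηs.continuous_fderiv (by simp)).norm
  obtain ⟨C, hC⟩ := (isCompact_closedBall (0 : RN N) 2).exists_bound_of_continuousOn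
    hcont.continuousOn
  have hbound : ∀ x : RN N, ‖fderiv ℝ η x‖ ≤ max C 0 := by
    intro x
    by_cases hx : x ∈ Metric.closedBall (0 : RN N) 2
    · have := hC x hx
      rw [norm_norm] at this
      exact this.trans (le_max_left _ _)
    · have hx' : 2 < ‖x‖ := by
        simpa [Metric.mem_closedBall, dist_zero_right] using hx
      have hopen : IsOpen {y : RN N | 2 < ‖y‖} := isOpen_lt continuous_const continuous_norm
      have hev : η =ᶠ[𝓝 x] fun _ => (1 : ℝ) := by
        filter_upwards [hopen.mem_nhds hx'] with y hy
        exact hη1 y (by simpa [Metric.mem_ball, dist_zero_right] using not_lt.2 hy.le)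
      have : fderiv ℝ η x = fderiv ℝ (fun _ => (1:ℝ)) x := hev.fderiv_eq
      simp only [this, fderiv_fun_const, Pi.zero_apply, norm_zero]
      exact le_max_right _ _
  refine ⟨max C 0 + 1, by simp [le_max_right], fun a b => ?_⟩
  have := Convex.norm_image_sub_le_of_norm_fderiv_le (f := η) (C := max C 0)
    (fun x _ => hdiff x) (fun x _ => hbound x) convex_univ (mem_univ b) (mem_univ a)
  calc |η a - η b| = ‖η a - η b‖ := rfl
    _ ≤ max C 0 * ‖a - b‖ := this
    _ ≤ (max C 0 + 1) * ‖a - b‖ := by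
        have := norm_nonneg (a - b); nlinarith [le_max_right C 0]

lemma geom_aux (c : ℝ≥0∞) (hc : c ≠ ⊤) {q : ℝ≥0∞} (hq : q < 1) (B : ℝ≥0∞) (hB : B ≠ ⊤) :
    ∑' n : ℕ, c * q ^ n * B < ⊤ := by
  have h1 : ∑' n : ℕ, c * q ^ n * B = (c * B) * ∑' n : ℕ, q ^ n := by
    rw [← ENNReal.tsum_mul_left]
    congr 1 with n; ring
  rw [h1, ENNReal.tsum_geometric]
  exact ENNReal.mul_lt_top (ENNReal.mul_lt_top hc.lt_top hB.lt_top)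
    (ENNReal.inv_lt_top.2 (tsub_pos_of_lt hq))

lemma I1_lt_top (N : ℕ) (hN : 2 ≤ N) (s : ℝ) (hs0 : 0 < s) (hs1 : s < 1) :
    ∫⁻ z : RN N, ENNReal.ofReal ((min 1 ‖z‖) ^ 2 / ‖z‖ ^ ((N : ℝ) + 2 * s)) < ⊤ := by
  haveI : Nonempty (Fin N) := ⟨⟨0, by omega⟩⟩
  haveI : Nontrivial (RN N) := by infer_instance
  have hN2 : (2 : ℝ) ≤ (N : ℝ) := by exact_mod_cast hN
  set p : ℝ := (N : ℝ) + 2 * s with hpdef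
  have hp0 : 0 < p := by positivity
  set a : ℝ := p - 2 with hadef
  have ha0 : 0 ≤ a := by simp only [hadef, hpdef]; linarith
  have haN : a < (N : ℝ) := by simp only [hadef, hpdef]; linarith
  have hrank : Module.finrank ℝ (RN N) = N := finrank_euclideanSpace_fin
  set f : RN N → ℝ≥0∞ := fun z => ENNReal.ofReal ((min 1 ‖z‖) ^ 2 / ‖z‖ ^ p) with hfdef
  have hμB : volume (Metric.ball (0 : RN N) 1) ≠ ⊤ := measure_ball_lt_top.ne
  have hvol : ∀ r : ℝ, 0 ≤ r → volume (Metric.ball (0 : RN N) r)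
      = ENNReal.ofReal (r ^ N) * volume (Metric.ball (0 : RN N) 1) := by
    intro r hr
    rw [Measure.addHaar_ball volume 0 hr, hrank]
  rw [← lintegral_add_compl f (measurableSet_ball (x := (0 : RN N)) (ε := 1))]
  refine ENNReal.add_lt_top.2 ⟨?_, ?_⟩
  · -- singular part, inner shells
    set S : ℕ → Set (RN N) := fun n =>
      Metric.ball (0 : RN N) ((1/2 : ℝ) ^ n) \ Metric.ball (0 : RN N) ((1/2 : ℝ) ^ (n + 1))
      with hSdef
    have hcover : Metric.ball (0 : RN N) 1 ⊆ {0} ∪ ⋃ n : ℕ, S n := by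
      intro z hz
      rcases eq_or_ne z 0 with rfl | hz0
      · exact Or.inl rfl
      refine Or.inr ?_
      have hzpos : 0 < ‖z‖ := norm_pos_iff.2 hz0
      have hz1 : ‖z‖ < 1 := by simpa [Metric.mem_ball, dist_zero_right] using hz
      have hex : ∃ m : ℕ, (1/2 : ℝ) ^ m ≤ ‖z‖ := by
        obtain ⟨m, hm⟩ := exists_pow_lt_of_lt_one hzpos (by norm_num : (1/2 : ℝ) < 1)
        exact ⟨m, hm.le⟩
      have hk0 : Nat.find hex ≠ 0 := by
        intro h
        have := Nat.find_spec hex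
        rw [h] at this; simp at this; linarith
      obtain ⟨m, hm⟩ := Nat.exists_eq_succ_of_ne_zero hk0
      refine mem_iUnion.2 ⟨m, ?_, ?_⟩
      · have := Nat.find_min hex (m := m) (by omega)
        simpa [Metric.mem_ball, dist_zero_right] using lt_of_not_ge this
      · have := Nat.find_spec hex
        rw [hm] at this
        simpa [Metric.mem_ball, dist_zero_right] using this
    calc ∫⁻ z in Metric.ball (0 : RN N) 1, f z
        ≤ ∫⁻ z in ({0} ∪ ⋃ n : ℕ, S n), f z := lintegral_mono_set hcover
      _ ≤ (∫⁻ z in ({(0 : RN N)} : Set (RN N)), f z) + ∫⁻ z in (⋃ n : ℕ, S n), f z :=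
          lintegral_union_le _ _ _
      _ ≤ 0 + ∑' n : ℕ, ∫⁻ z in S n, f z := by
          gcongr
          · rw [setLIntegral_measure_zero _ _ (measure_singleton 0)]
          · exact lintegral_iUnion_le _ _
      _ ≤ 0 + ∑' n : ℕ, ENNReal.ofReal (((1/2 : ℝ) ^ (n + 1)) ^ (-a)) *
            (ENNReal.ofReal (((1/2 : ℝ) ^ n) ^ N) * volume (Metric.ball (0 : RN N) 1)) := by
          gcongr with n
          have hbound : ∀ z ∈ S n, f z ≤ ENNReal.ofReal (((1/2 : ℝ) ^ (n + 1)) ^ (-a)) := by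
            intro z hz
            obtain ⟨hz1, hz2⟩ := hz
            rw [Metric.mem_ball, dist_zero_right] at hz1
            rw [Metric.mem_ball, dist_zero_right, not_lt] at hz2
            have hzpos : 0 < ‖z‖ := lt_of_lt_of_le (by positivity) hz2
            have hmin : min 1 ‖z‖ = ‖z‖ := min_eq_right (le_of_lt (by
              calc ‖z‖ < (1/2 : ℝ) ^ n := hz1
                _ ≤ 1 := by
                    apply pow_le_one₀ <;> norm_num))
            have hval : (min 1 ‖z‖) ^ 2 / ‖z‖ ^ p = ‖z‖ ^ (-a) := by
              rw [hmin, ← Real.rpow_natCast ‖z‖ 2, ← Real.rpow_sub hzpos]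
              norm_num [hadef]
            rw [hfdef]
            simp only []
            rw [hval]
            apply ENNReal.ofReal_le_ofReal
            exact Real.rpow_le_rpow_of_nonpos (by positivity) hz2 (by linarith)
          calc ∫⁻ z in S n, f z
              ≤ ∫⁻ _ in S n, ENNReal.ofReal (((1/2 : ℝ) ^ (n + 1)) ^ (-a)) :=
                setLIntegral_mono' (measurableSet_ball.diff measurableSet_ball) hbound
            _ = ENNReal.ofReal (((1/2 : ℝ) ^ (n + 1)) ^ (-a)) * volume (S n) :=
                setLIntegral_const _ _
            _ ≤ ENNReal.ofReal (((1/2 : ℝ) ^ (n + 1)) ^ (-a)) *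
                volume (Metric.ball (0 : RN N) ((1/2 : ℝ) ^ n)) :=
                mul_le_mul_right (measure_mono diff_subset) _
            _ = _ := by rw [hvol _ (by positivity)]
      _ < ⊤ := by
          rw [zero_add]
          have key : ∀ n : ℕ, ((1/2 : ℝ) ^ (n + 1)) ^ (-a) * ((1/2 : ℝ) ^ n) ^ N
              = (1/2 : ℝ) ^ (-a) * (((1/2 : ℝ) ^ ((N : ℝ) - a)) ^ n) := by
            intro n
            have hhalf : (0 : ℝ) < 1/2 := by norm_num
            rw [← Real.rpow_natCast (1/2 : ℝ) (n + 1), ← Real.rpow_mul hhalf.le,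
              ← Real.rpow_natCast ((1/2 : ℝ) ^ (n : ℕ)) N,
              ← Real.rpow_natCast (1/2 : ℝ) n, ← Real.rpow_mul hhalf.le,
              ← Real.rpow_add hhalf,
              ← Real.rpow_natCast ((1/2 : ℝ) ^ ((N : ℝ) - a)) n, ← Real.rpow_mul hhalf.le,
              ← Real.rpow_add hhalf]
            congr 1
            push_cast
            ring
          have hterm : ∀ n : ℕ, ENNReal.ofReal (((1/2 : ℝ) ^ (n + 1)) ^ (-a)) *
              (ENNReal.ofReal (((1/2 : ℝ) ^ n) ^ N) * volume (Metric.ball (0 : RN N) 1))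
              = ENNReal.ofReal ((1/2 : ℝ) ^ (-a)) *
                (ENNReal.ofReal ((1/2 : ℝ) ^ ((N : ℝ) - a))) ^ n *
                volume (Metric.ball (0 : RN N) 1) := by
            intro n
            rw [← mul_assoc, ← ENNReal.ofReal_mul (by positivity), key n,
              ENNReal.ofReal_mul (by positivity), ENNReal.ofReal_pow (by positivity)]
          rw [tsum_congr hterm]
          refine geom_aux _ ENNReal.ofReal_ne_top ?_ _ hμB
          exact ENNReal.ofReal_lt_one.2
            (Real.rpow_lt_one (by norm_num) (by norm_num) (by linarith))
  · -- tail part, outer shells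
    set T : ℕ → Set (RN N) := fun n =>
      Metric.ball (0 : RN N) ((2 : ℝ) ^ (n + 1)) \ Metric.ball (0 : RN N) ((2 : ℝ) ^ n)
      with hTdef
    have hcover : (Metric.ball (0 : RN N) 1)ᶜ ⊆ ⋃ n : ℕ, T n := by
      intro z hz
      have hz1 : 1 ≤ ‖z‖ := by
        simpa [Metric.mem_ball, dist_zero_right, not_lt] using hz
      have hex : ∃ m : ℕ, ‖z‖ < (2 : ℝ) ^ m := pow_unbounded_of_one_lt ‖z‖ one_lt_two
      have hk0 : Nat.find hex ≠ 0 := by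
        intro h
        have := Nat.find_spec hex
        rw [h] at this; simp at this; linarith
      obtain ⟨m, hm⟩ := Nat.exists_eq_succ_of_ne_zero hk0
      refine mem_iUnion.2 ⟨m, ?_, ?_⟩
      · have := Nat.find_spec hex
        rw [hm] at this
        simpa [Metric.mem_ball, dist_zero_right] using this
      · have := Nat.find_min hex (m := m) (by omega)
        simpa [Metric.mem_ball, dist_zero_right] using this
    calc ∫⁻ z in (Metric.ball (0 : RN N) 1)ᶜ, f z
        ≤ ∫⁻ z in (⋃ n : ℕ, T n), f z := lintegral_mono_set hcover
      _ ≤ ∑' n : ℕ, ∫⁻ z in T n, f z := lintegral_iUnion_le _ _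
      _ ≤ ∑' n : ℕ, ENNReal.ofReal (((2 : ℝ) ^ n) ^ (-p)) *
            (ENNReal.ofReal (((2 : ℝ) ^ (n + 1)) ^ N) * volume (Metric.ball (0 : RN N) 1)) := by
          gcongr with n
          have hbound : ∀ z ∈ T n, f z ≤ ENNReal.ofReal (((2 : ℝ) ^ n) ^ (-p)) := by
            intro z hz
            obtain ⟨hz1, hz2⟩ := hz
            rw [Metric.mem_ball, dist_zero_right] at hz1
            rw [Metric.mem_ball, dist_zero_right, not_lt] at hz2
            have h2n : (1 : ℝ) ≤ (2 : ℝ) ^ n := one_le_pow₀ (by norm_num)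
            have hzpos : (0 : ℝ) < ‖z‖ := lt_of_lt_of_le one_pos (h2n.trans hz2)
            have hmin : min 1 ‖z‖ = 1 := min_eq_left (h2n.trans hz2)
            have hval : (min 1 ‖z‖) ^ 2 / ‖z‖ ^ p = ‖z‖ ^ (-p) := by
              rw [hmin, one_pow, Real.rpow_neg (norm_nonneg z), one_div]
            rw [hfdef]
            simp only []
            rw [hval]
            apply ENNReal.ofReal_le_ofReal
            exact Real.rpow_le_rpow_of_nonpos (by positivity) hz2 (by linarith)
          calc ∫⁻ z in T n, f z
              ≤ ∫⁻ _ in T n, ENNReal.ofReal (((2 : ℝ) ^ n) ^ (-p)) :=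
                setLIntegral_mono' (measurableSet_ball.diff measurableSet_ball) hbound
            _ = ENNReal.ofReal (((2 : ℝ) ^ n) ^ (-p)) * volume (T n) :=
                setLIntegral_const _ _
            _ ≤ ENNReal.ofReal (((2 : ℝ) ^ n) ^ (-p)) *
                volume (Metric.ball (0 : RN N) ((2 : ℝ) ^ (n + 1))) :=
                mul_le_mul_right (measure_mono diff_subset) _
            _ = _ := by rw [hvol _ (by positivity)]
      _ < ⊤ := by
          have key : ∀ n : ℕ, ((2 : ℝ) ^ n) ^ (-p) * ((2 : ℝ) ^ (n + 1)) ^ N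
              = (2 : ℝ) ^ (N : ℝ) * (((2 : ℝ) ^ ((N : ℝ) - p)) ^ n) := by
            intro n
            have h2 : (0 : ℝ) < 2 := by norm_num
            rw [← Real.rpow_natCast (2 : ℝ) n, ← Real.rpow_mul h2.le,
              ← Real.rpow_natCast ((2 : ℝ) ^ (n + 1 : ℕ)) N,
              ← Real.rpow_natCast (2 : ℝ) (n + 1), ← Real.rpow_mul h2.le,
              ← Real.rpow_add h2,
              ← Real.rpow_natCast ((2 : ℝ) ^ ((N : ℝ) - p)) n, ← Real.rpow_mul h2.le,
              ← Real.rpow_add h2]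
            congr 1
            push_cast
            ring
          have hterm : ∀ n : ℕ, ENNReal.ofReal (((2 : ℝ) ^ n) ^ (-p)) *
              (ENNReal.ofReal (((2 : ℝ) ^ (n + 1)) ^ N) * volume (Metric.ball (0 : RN N) 1))
              = ENNReal.ofReal ((2 : ℝ) ^ (N : ℝ)) *
                (ENNReal.ofReal ((2 : ℝ) ^ ((N : ℝ) - p))) ^ n *
                volume (Metric.ball (0 : RN N) 1) := by
            intro n
            rw [← mul_assoc, ← ENNReal.ofReal_mul (by positivity), key n,
              ENNReal.ofReal_mul (by positivity), ENNReal.ofReal_pow (by positivity)]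
          rw [tsum_congr hterm]
          refine geom_aux _ ENNReal.ofReal_ne_top ?_ _ hμB
          refine ENNReal.ofReal_lt_one.2 ?_
          apply Real.rpow_lt_one_of_one_lt_of_neg one_lt_two
          simp only [hpdef]
          linarith

lemma G1_meas (N : ℕ) (p : ℝ) :
    Measurable (fun u : RN N => ENNReal.ofReal ((min 1 ‖u‖) ^ 2 / ‖u‖ ^ p)) := by
  fun_prop

lemma G2_meas (N : ℕ) (p ρ : ℝ) :
    Measurable (fun u : RN N => ENNReal.ofReal ((min 1 (‖u‖ / ρ)) ^ 2 / ‖u‖ ^ p)) := by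
  fun_prop

lemma Iscale (N : ℕ) (hN : 2 ≤ N) (s : ℝ) (hs0 : 0 < s) (hNs : 2 * s < (N : ℝ))
    (ρ : ℝ) (hρ : 0 < ρ) :
    ∫⁻ z : RN N, ENNReal.ofReal ((min 1 (‖z‖ / ρ)) ^ 2 / ‖z‖ ^ ((N : ℝ) + 2 * s))
      = ENNReal.ofReal (ρ ^ (-(2 * s))) *
        ∫⁻ z : RN N, ENNReal.ofReal ((min 1 ‖z‖) ^ 2 / ‖z‖ ^ ((N : ℝ) + 2 * s)) := by
  haveI : Nonempty (Fin N) := ⟨⟨0, by omega⟩⟩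
  set p : ℝ := (N : ℝ) + 2 * s with hpdef
  have hp0 : 0 < p := by positivity
  have hrank : Module.finrank ℝ (RN N) = N := finrank_euclideanSpace_fin
  have hpt : ∀ z : RN N, (min 1 (‖z‖ / ρ)) ^ 2 / ‖z‖ ^ p
      = ρ ^ (-p) * ((min 1 ‖ρ⁻¹ • z‖) ^ 2 / ‖ρ⁻¹ • z‖ ^ p) := by
    intro z
    rcases eq_or_ne z 0 with rfl | hz
    · simp [Real.zero_rpow hp0.ne']
    · have hz0 : 0 < ‖z‖ := norm_pos_iff.2 hz
      have hsm : ‖ρ⁻¹ • z‖ = ‖z‖ / ρ := by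
        rw [norm_smul, Real.norm_eq_abs, abs_of_pos (inv_pos.2 hρ), inv_mul_eq_div]
      rw [hsm, Real.div_rpow (norm_nonneg z) hρ.le, Real.rpow_neg hρ.le]
      have hA : (0 : ℝ) < ‖z‖ ^ p := Real.rpow_pos_of_pos hz0 p
      have hB : (0 : ℝ) < ρ ^ p := Real.rpow_pos_of_pos hρ p
      field_simp
  calc ∫⁻ z : RN N, ENNReal.ofReal ((min 1 (‖z‖ / ρ)) ^ 2 / ‖z‖ ^ p)
      = ∫⁻ z : RN N, ENNReal.ofReal (ρ ^ (-p)) *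
          ENNReal.ofReal ((min 1 ‖ρ⁻¹ • z‖) ^ 2 / ‖ρ⁻¹ • z‖ ^ p) := by
        refine lintegral_congr fun z => ?_
        rw [hpt z, ENNReal.ofReal_mul (Real.rpow_nonneg hρ.le _)]
    _ = ENNReal.ofReal (ρ ^ (-p)) *
          ∫⁻ z : RN N, ENNReal.ofReal ((min 1 ‖ρ⁻¹ • z‖) ^ 2 / ‖ρ⁻¹ • z‖ ^ p) :=
        lintegral_const_mul' _ _ ENNReal.ofReal_ne_top
    _ = ENNReal.ofReal (ρ ^ (-p)) * (ENNReal.ofReal (ρ ^ (N : ℕ)) *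
          ∫⁻ u : RN N, ENNReal.ofReal ((min 1 ‖u‖) ^ 2 / ‖u‖ ^ p)) := by
        congr 1
        have hmap := Measure.map_addHaar_smul (volume : Measure (RN N))
          (inv_ne_zero hρ.ne')
        have h1 : ∫⁻ z : RN N, ENNReal.ofReal ((min 1 ‖ρ⁻¹ • z‖) ^ 2 / ‖ρ⁻¹ • z‖ ^ p)
            = ∫⁻ u, ENNReal.ofReal ((min 1 ‖u‖) ^ 2 / ‖u‖ ^ p)
                ∂(Measure.map (ρ⁻¹ • ·) volume) :=
          (lintegral_map (G1_meas N p) (measurable_const_smul ρ⁻¹)).symm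
        rw [h1, hmap, lintegral_smul_measure, hrank]
        congr 1
        rw [abs_of_pos (by positivity), ← inv_pow, inv_inv]
    _ = _ := by
        rw [← mul_assoc, ← ENNReal.ofReal_mul (Real.rpow_nonneg hρ.le _)]
        congr 2
        rw [← Real.rpow_natCast ρ N, ← Real.rpow_add hρ]
        congr 1
        simp only [hpdef]
        ring


theorem stmt_6 (N : ℕ) (hN : 2 ≤ N) (s : ℝ) (hs0 : 0 < s) (hs1 : s < 1)
    (hNs : 2 * s < (N : ℝ))
    (w : ℕ → RN N → ℝ) (hmem : ∀ j, memHs N s (w j))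
    (M : ℝ) (hbd : ∀ j, fracE N s (w j) (w j) + (∫ x, w j x ^ 2) ≤ M)
    (η : RN N → ℝ) (hηs : ContDiff ℝ (⊤ : ℕ∞) η) (hη01 : ∀ x, η x ∈ Icc (0:ℝ) 1)
    (hη0 : ∀ x ∈ Metric.ball (0 : RN N) 1, η x = 0)
    (hη1 : ∀ x ∉ Metric.ball (0 : RN N) 2, η x = 1) :
    Tendsto (fun R : ℝ =>
        Filter.limsup (fun j =>
          ∫⁻ q : RN N × RN N, ENNReal.ofReal
            ((w j q.1) ^ 2 * (η (R⁻¹ • q.1) - η (R⁻¹ • q.2)) ^ 2 /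
              ‖q.1 - q.2‖ ^ ((N : ℝ) + 2 * s))) atTop)
      atTop (𝓝 0) := by
  obtain ⟨L, hL1, hLip⟩ := eta_lip η hηs hη1
  have hL0 : (0 : ℝ) < L := lt_of_lt_of_le one_pos hL1
  set p : ℝ := (N : ℝ) + 2 * s with hpdef
  set I1 : ℝ≥0∞ := ∫⁻ z : RN N, ENNReal.ofReal ((min 1 ‖z‖) ^ 2 / ‖z‖ ^ p) with hI1def
  have hI1 : I1 ≠ ⊤ := (I1_lt_top N hN s hs0 hs1).ne
  -- uniform L² bound
  have hfrac : ∀ j, 0 ≤ fracE N s (w j) (w j) := fun j =>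
    integral_nonneg fun q => div_nonneg (mul_self_nonneg _)
      (Real.rpow_nonneg (norm_nonneg _) _)
  have hL2 : ∀ j, (∫⁻ x : RN N, ENNReal.ofReal ((w j x) ^ 2)) ≤ ENNReal.ofReal M := by
    intro j
    rw [← ofReal_integral_eq_lintegral_ofReal ((hmem j).1.integrable_sq)
      (Eventually.of_forall fun x => sq_nonneg _)]
    exact ENNReal.ofReal_le_ofReal (by linarith [hbd j, hfrac j])
  -- key uniform estimate
  have hkey : ∀ R : ℝ, 0 < R → ∀ j : ℕ,
      (∫⁻ q : RN N × RN N, ENNReal.ofReal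
          ((w j q.1) ^ 2 * (η (R⁻¹ • q.1) - η (R⁻¹ • q.2)) ^ 2 /
            ‖q.1 - q.2‖ ^ p))
        ≤ (ENNReal.ofReal M * I1) * ENNReal.ofReal ((R / L) ^ (-(2 * s))) := by
    intro R hR j
    set ρ : ℝ := R / L with hρdef
    have hρ : 0 < ρ := by positivity
    have hptw : ∀ q : RN N × RN N, ENNReal.ofReal
        ((w j q.1) ^ 2 * (η (R⁻¹ • q.1) - η (R⁻¹ • q.2)) ^ 2 / ‖q.1 - q.2‖ ^ p)
        ≤ ENNReal.ofReal ((w j q.1) ^ 2) *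
          ENNReal.ofReal ((min 1 (‖q.1 - q.2‖ / ρ)) ^ 2 / ‖q.1 - q.2‖ ^ p) := by
      rintro ⟨x, y⟩
      rcases eq_or_ne x y with rfl | hxy
      · simp
      · have hd : 0 < ‖x - y‖ := by
          rw [norm_pos_iff]
          exact sub_ne_zero.2 hxy
        have hdp : 0 < ‖x - y‖ ^ p := Real.rpow_pos_of_pos hd p
        have b1 : |η (R⁻¹ • x) - η (R⁻¹ • y)| ≤ 1 := by
          have h1 := hη01 (R⁻¹ • x); have h2 := hη01 (R⁻¹ • y)
          rw [abs_sub_le_iff]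
          constructor <;> [skip; skip] <;>
            · obtain ⟨ha, hb⟩ := h1; obtain ⟨hc, hdd⟩ := h2; linarith
        have b2 : |η (R⁻¹ • x) - η (R⁻¹ • y)| ≤ ‖x - y‖ / ρ := by
          have := hLip (R⁻¹ • x) (R⁻¹ • y)
          have hnorm : ‖R⁻¹ • x - R⁻¹ • y‖ = R⁻¹ * ‖x - y‖ := by
            rw [← smul_sub, norm_smul, Real.norm_eq_abs, abs_of_pos (inv_pos.2 hR)]
          have heq : L * (R⁻¹ * ‖x - y‖) = ‖x - y‖ / ρ := by
            rw [hρdef]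
            field_simp
          rw [hnorm, heq] at this
          exact this
        have hmd : |η (R⁻¹ • x) - η (R⁻¹ • y)| ≤ min 1 (‖x - y‖ / ρ) := le_min b1 b2
        have hsq : (η (R⁻¹ • x) - η (R⁻¹ • y)) ^ 2 ≤ (min 1 (‖x - y‖ / ρ)) ^ 2 := by
          rw [← sq_abs]
          exact pow_le_pow_left₀ (abs_nonneg _) hmd 2
        have hle : (w j x) ^ 2 * (η (R⁻¹ • x) - η (R⁻¹ • y)) ^ 2 / ‖x - y‖ ^ p
            ≤ (w j x) ^ 2 * ((min 1 (‖x - y‖ / ρ)) ^ 2 / ‖x - y‖ ^ p) := by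
          rw [← mul_div_assoc]
          gcongr
        exact le_trans (ENNReal.ofReal_le_ofReal hle)
          (le_of_eq (ENNReal.ofReal_mul (sq_nonneg _)))
    have hwm : AEMeasurable (fun q : RN N × RN N => w j q.1)
        ((volume : Measure (RN N)).prod (volume : Measure (RN N))) :=
      ((hmem j).1.aestronglyMeasurable.aemeasurable).comp_quasiMeasurePreserving
        Measure.quasiMeasurePreserving_fst
    have hGm : Measurable (fun q : RN N × RN N =>
        ENNReal.ofReal ((min 1 (‖q.1 - q.2‖ / ρ)) ^ 2 / ‖q.1 - q.2‖ ^ p)) :=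
      (G2_meas N p ρ).comp (measurable_fst.sub measurable_snd)
    have hmeas : AEMeasurable (fun q : RN N × RN N =>
        ENNReal.ofReal ((w j q.1) ^ 2) *
          ENNReal.ofReal ((min 1 (‖q.1 - q.2‖ / ρ)) ^ 2 / ‖q.1 - q.2‖ ^ p))
        ((volume : Measure (RN N)).prod (volume : Measure (RN N))) :=
      ((hwm.pow_const 2).ennreal_ofReal).mul hGm.aemeasurable
    calc (∫⁻ q : RN N × RN N, ENNReal.ofReal
          ((w j q.1) ^ 2 * (η (R⁻¹ • q.1) - η (R⁻¹ • q.2)) ^ 2 / ‖q.1 - q.2‖ ^ p))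
        ≤ ∫⁻ q : RN N × RN N, ENNReal.ofReal ((w j q.1) ^ 2) *
            ENNReal.ofReal ((min 1 (‖q.1 - q.2‖ / ρ)) ^ 2 / ‖q.1 - q.2‖ ^ p) :=
          lintegral_mono hptw
      _ = ∫⁻ x : RN N, ∫⁻ y : RN N, ENNReal.ofReal ((w j x) ^ 2) *
            ENNReal.ofReal ((min 1 (‖x - y‖ / ρ)) ^ 2 / ‖x - y‖ ^ p) := by
          rw [Measure.volume_eq_prod, lintegral_prod _ hmeas]
      _ = ∫⁻ x : RN N, ENNReal.ofReal ((w j x) ^ 2) *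
            ∫⁻ y : RN N, ENNReal.ofReal ((min 1 (‖x - y‖ / ρ)) ^ 2 / ‖x - y‖ ^ p) :=
          lintegral_congr fun x => lintegral_const_mul' _ _ ENNReal.ofReal_ne_top
      _ = ∫⁻ x : RN N, ENNReal.ofReal ((w j x) ^ 2) *
            (ENNReal.ofReal (ρ ^ (-(2 * s))) * I1) := by
          refine lintegral_congr fun x => ?_
          congr 1
          have htrans : ∫⁻ y : RN N,
              ENNReal.ofReal ((min 1 (‖x - y‖ / ρ)) ^ 2 / ‖x - y‖ ^ p)
              = ∫⁻ z : RN N, ENNReal.ofReal ((min 1 (‖z‖ / ρ)) ^ 2 / ‖z‖ ^ p) :=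
            (Measure.measurePreserving_sub_left volume x).lintegral_comp (G2_meas N p ρ)
          rw [htrans, hI1def, Iscale N hN s hs0 hNs ρ hρ]
      _ = (∫⁻ x : RN N, ENNReal.ofReal ((w j x) ^ 2)) *
            (ENNReal.ofReal (ρ ^ (-(2 * s))) * I1) :=
          lintegral_mul_const' _ _
            (ENNReal.mul_ne_top ENNReal.ofReal_ne_top hI1)
      _ ≤ ENNReal.ofReal M * (ENNReal.ofReal (ρ ^ (-(2 * s))) * I1) :=
          mul_le_mul_left (hL2 j) _
      _ = (ENNReal.ofReal M * I1) * ENNReal.ofReal ((R / L) ^ (-(2 * s))) := by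
          rw [hρdef]; ring
  -- pass to the limit
  have hBtend : Tendsto (fun R : ℝ =>
      (ENNReal.ofReal M * I1) * ENNReal.ofReal ((R / L) ^ (-(2 * s)))) atTop (𝓝 0) := by
    have h1 : Tendsto (fun R : ℝ => (R / L) ^ (-(2 * s))) atTop (𝓝 0) :=
      (tendsto_rpow_neg_atTop (by linarith)).comp (tendsto_id.atTop_div_const hL0)
    have h2 : Tendsto (fun R : ℝ => ENNReal.ofReal ((R / L) ^ (-(2 * s)))) atTop (𝓝 0) := by
      simpa using ENNReal.tendsto_ofReal (a := 0) h1
    have h3 := ENNReal.Tendsto.const_mul (a := ENNReal.ofReal M * I1) h2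
      (Or.inr (ENNReal.mul_ne_top ENNReal.ofReal_ne_top hI1))
    simpa using h3
  refine tendsto_of_tendsto_of_tendsto_of_le_of_le' tendsto_const_nhds hBtend
    (Eventually.of_forall fun R => zero_le) ?_
  filter_upwards [eventually_gt_atTop (0 : ℝ)] with R hR
  exact Filter.limsup_le_of_le (by isBoundedDefault)
    (Eventually.of_forall fun j => hkey R hR j)


end
end
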